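/- arXiv:0905.2747 — 3 statements merged into one kernel-verified Lean document; each statement's English description precedes it below -/
import Mathlib

section
/- Consider a finite bipartite graph on vertex sets V and W with |V| = n, |W| = m, m ≥ n, and a function a : V → ℕ with a(v) ≥ 1 for all v and ∑_{v ∈ V} a(v) = m. Suppose that for every nonempty subset V' ⊆ V, the set of vertices in W adjacent to some vertex of V' has cardinality at least ∑_{v ∈ V'} a(v). Then there exists a map τ : W → V such that every w ∈ W is adjacent to τ(w), and for every v ∈ V the fiber τ^{-1}(v) has exactly a(v) elements. -/
/-!
Replace each `v ∈ V` by `a v` copies `(v, i)`, `i < a v`, each adjacent to the neighbours of `v`.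
A set of copies lying over `T ⊆ V` has at most `∑_{v ∈ T} a v` elements and the same neighbourhood
as `T`, so the weighted condition is Hall's condition for the copies. Hall's theorem gives an
injection of the `∑ v, a v = |W|` copies into `W`, hence a bijection, and `τ` sends `w` to the
vertex under its preimage.
-/

open Finset Function

theorem Finset.exists_injective_sigma_of_sum_le_card_biUnion {ι α : Type*} [DecidableEq α]
    (a : ι → ℕ) (t : ι → Finset α) (h : ∀ s : Finset ι, ∑ i ∈ s, a i ≤ #(s.biUnion t)) :
    ∃ f : (Σ i, Fin (a i)) → α, Injective f ∧ ∀ x, f x ∈ t x.1 := by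
  classical
  refine (all_card_le_biUnion_card_iff_exists_injective fun x : Σ i, Fin (a i) => t x.1).mp
    fun A => ?_
  have hA : A ⊆ (A.image Sigma.fst).sigma fun _ => univ := fun x hx =>
    mem_sigma.mpr ⟨mem_image_of_mem _ hx, mem_univ _⟩
  calc #A ≤ #((A.image Sigma.fst).sigma fun _ => univ) := card_le_card hA
    _ = ∑ i ∈ A.image Sigma.fst, a i := by simp [card_sigma]
    _ ≤ #((A.image Sigma.fst).biUnion t) := h _
    _ = #(A.biUnion fun x => t x.1) := by rw [image_biUnion]

theorem Set.ncard_setOf_fst_symm_eq {ι β : Type*} {a : ι → ℕ} (e : (Σ i, Fin (a i)) ≃ β)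
    (i : ι) : {b : β | (e.symm b).1 = i}.ncard = a i := by
  have hfiber : {b : β | (e.symm b).1 = i} = range (e ∘ Sigma.mk i) := by
    ext b
    constructor
    · obtain ⟨⟨j, k⟩, rfl⟩ := e.surjective b
      intro hj
      simp only [mem_ofPred_eq, Equiv.symm_apply_apply] at hj
      subst hj
      exact ⟨k, rfl⟩
    · rintro ⟨k, rfl⟩
      simp
  rw [hfiber, ncard_range_of_injective (e.injective.comp sigma_mk_injective), Nat.card_fin]

theorem generalized_hall_general {V W : Type*} [Fintype V] [Fintype W]
    (E : V → W → Prop) (a : V → ℕ)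
    (hsum : ∑ v, a v = Fintype.card W)
    (hhall : ∀ V' : Finset V, V'.Nonempty →
      ∑ v ∈ V', a v ≤ Set.ncard {w : W | ∃ v ∈ V', E v w}) :
    ∃ τ : W → V, (∀ w, E (τ w) w) ∧ ∀ v, Set.ncard {w : W | τ w = v} = a v := by
  classical
  have hhall' : ∀ s : Finset V, ∑ v ∈ s, a v ≤ #(s.biUnion fun v => univ.filter (E v)) := by
    intro s
    obtain rfl | hs := s.eq_empty_or_nonempty
    · simp
    · convert hhall s hs using 1
      rw [← Set.ncard_coe_finset]
      congr 1
      ext w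
      simp
  obtain ⟨f, hf_inj, hf_adj⟩ := exists_injective_sigma_of_sum_le_card_biUnion a _ hhall'
  have hf_bij : Bijective f :=
    (Fintype.bijective_iff_injective_and_card f).mpr ⟨hf_inj, by simp [hsum]⟩
  let e := Equiv.ofBijective f hf_bij
  refine ⟨fun w => (e.symm w).1, fun w => ?_, Set.ncard_setOf_fst_symm_eq e⟩
  simpa [e, Equiv.ofBijective_apply_symm_apply] using hf_adj (e.symm w)

/-- **Generalized Hall theorem with prescribed fiber sizes.** Given a bipartite graph on
finite vertex sets `V`, `W` with `|V| ≤ |W|`, and `a : V → ℕ` with `a v ≥ 1` and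
`∑ v, a v = |W|`, if every nonempty `V' ⊆ V` has at least `∑_{v ∈ V'} a v` neighbours in
`W`, then there is `τ : W → V` matching each `w` to an adjacent vertex, with every fiber
`τ⁻¹(v)` of size exactly `a v`. -/
theorem generalized_hall {V W : Type*} [Fintype V] [Fintype W]
    (E : V → W → Prop) (a : V → ℕ)
    (hcard : Fintype.card V ≤ Fintype.card W)
    (ha : ∀ v, 1 ≤ a v)
    (hsum : ∑ v, a v = Fintype.card W)
    (hhall : ∀ V' : Finset V, V'.Nonempty →
      ∑ v ∈ V', a v ≤ Set.ncard {w : W | ∃ v ∈ V', E v w}) :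
    ∃ τ : W → V, (∀ w, E (τ w) w) ∧ ∀ v, Set.ncard {w : W | τ w = v} = a v :=
  generalized_hall_general E a hsum hhall
end

section
/- Let F_1, ..., F_{n+1} be finite families of convex compact sets in ℝ^n. Suppose that for every choice of representatives X_i ∈ F_i (i = 1, ..., n+1) the intersection ⋂_{i=1}^{n+1} X_i is nonempty. Then there exists an index i such that ⋂ F_i (the intersection of all sets in F_i) is nonempty. -/
/-! For every system of representatives `f`, let `p f` be a point of `⋂ i, f i` of least norm, and
fix a system `f` for which `‖p f‖` is largest. The open ball of radius `‖p f‖` and the sets `f i`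
are at least `d + 2` convex sets in dimension `d` without a common point, so by Helly's theorem all
but one of them already have none; the omitted set is not the ball, since `p f` lies in every `f i`.
Thus for some colour `i` the point `p f` has least norm on `⋂ j ≠ i, f j` too. Exchanging `f i` for
any `Y ∈ F i` gives a system whose nearest point lies in `⋂ j ≠ i, f j` and, by the maximality of
`f`, is no farther from the origin than `p f`. In a strictly convex space a convex set has only one
point of least norm, so that point is `p f`, and hence `p f ∈ Y`. -/

open Set Module

variable {E : Type*} [NormedAddCommGroup E] [NormedSpace ℝ E]

theorem Convex.eq_of_isMinOn_norm [StrictConvexSpace ℝ E] {C : Set E} (hC : Convex ℝ C)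
    {x y : E} (hxC : x ∈ C) (hx : IsMinOn norm C x) (hyC : y ∈ C) (hyx : ‖y‖ ≤ ‖x‖) :
    y = x := by
  by_contra hne
  have hmid : (1 / 2 : ℝ) • y + (1 / 2 : ℝ) • x ∈ C :=
    hC hyC hxC (by norm_num) (by norm_num) (by norm_num)
  exact (norm_combo_lt_of_ne hyx le_rfl hne (by norm_num) (by norm_num) (by norm_num)).not_ge
    (isMinOn_iff.1 hx _ hmid)

variable [FiniteDimensional ℝ E] {ι : Type*} [Fintype ι]

theorem Convex.iInter_nonempty_of_forall_iInter_ne {S : ι → Set E}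
    (hcard : finrank ℝ E + 1 < Fintype.card ι) (hS : ∀ i, Convex ℝ (S i))
    (h : ∀ i, (⋂ (j) (_ : j ≠ i), S j).Nonempty) : (⋂ i, S i).Nonempty := by
  classical
  simpa using Convex.helly_theorem' (s := Finset.univ) (fun i _ => hS i) fun I _ hI => by
    obtain ⟨i, hi⟩ : ∃ i, i ∉ I := by
      by_contra! hall
      have := Finset.card_le_card (fun i _ => hall i : Finset.univ ⊆ I)
      rw [Finset.card_univ] at this
      omega
    exact (h i).mono (biInter_mono (fun j hj => ne_of_mem_of_not_mem hj hi) fun _ _ => le_rfl)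

theorem Convex.exists_isMinOn_norm_iInter_ne {S : ι → Set E}
    (hcard : finrank ℝ E < Fintype.card ι) (hS : ∀ i, Convex ℝ (S i)) {p : E}
    (hp : p ∈ ⋂ i, S i) (hmin : IsMinOn norm (⋂ i, S i) p) :
    ∃ i, IsMinOn norm (⋂ (j) (_ : j ≠ i), S j) p := by
  by_contra! hnot
  have hcloser : ∀ i, ∃ q ∈ ⋂ (j) (_ : j ≠ i), S j, ‖q‖ < ‖p‖ := fun i => by
    simpa [isMinOn_iff] using hnot i
  choose q hqS hqp using hcloser
  let T : Option ι → Set E := fun o => o.elim (Metric.ball 0 ‖p‖) S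
  have hT : (⋂ o, T o).Nonempty := by
    refine Convex.iInter_nonempty_of_forall_iInter_ne (by simpa using hcard)
      (fun o => o.rec (convex_ball 0 ‖p‖) hS) fun o => ?_
    cases o with
    | none => exact ⟨p, mem_iInter₂.2 fun o ho => by
        cases o with
        | none => exact absurd rfl ho
        | some j => exact mem_iInter.1 hp j⟩
    | some i => exact ⟨q i, mem_iInter₂.2 fun o ho => by
        cases o with
        | none => simpa [T] using hqp i
        | some j => exact mem_iInter₂.1 (hqS i) j (by simpa using ho)⟩
  obtain ⟨z, hz⟩ := hT
  rw [iInter_option] at hz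
  have hzp : ‖z‖ < ‖p‖ := by simpa [T] using hz.1
  exact hzp.not_ge (isMinOn_iff.1 hmin z hz.2)

theorem colored_helly_of_finrank_lt_card [StrictConvexSpace ℝ E]
    (hcard : finrank ℝ E < Fintype.card ι) (F : ι → Finset (Set E))
    (hconv : ∀ i, ∀ X ∈ F i, Convex ℝ X) (hcpt : ∀ i, ∀ X ∈ F i, IsCompact X)
    (hrep : ∀ f : ι → Set E, (∀ i, f i ∈ F i) → (⋂ i, f i).Nonempty) :
    ∃ i, (⋂ X ∈ (F i : Set (Set E)), X).Nonempty := by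
  classical
  by_cases hne : ∀ i, (F i).Nonempty
  swap
  · obtain ⟨i, hi⟩ := not_forall.1 hne
    exact ⟨i, by simp [Finset.not_nonempty_iff_eq_empty.1 hi]⟩
  obtain ⟨i₀⟩ : Nonempty ι := Fintype.card_pos_iff.1 (by omega)
  have : Nonempty (∀ i, F i) := ⟨fun i => ⟨_, (hne i).choose_spec⟩⟩
  have hK : ∀ f : ∀ i, F i, IsCompact (⋂ i, (f i : Set E)) := fun f =>
    (hcpt i₀ _ (f i₀).2).of_isClosed_subset
      (isClosed_iInter fun i => (hcpt i _ (f i).2).isClosed) (iInter_subset _ i₀)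
  choose p hpK hpmin using fun f : ∀ i, F i =>
    (hK f).exists_isMinOn (hrep _ fun i => (f i).2) continuous_norm.continuousOn
  obtain ⟨f, hf⟩ := Finite.exists_max fun f => ‖p f‖
  obtain ⟨i, hi⟩ :=
    Convex.exists_isMinOn_norm_iInter_ne hcard (fun i => hconv i _ (f i).2) (hpK f) (hpmin f)
  refine ⟨i, p f, mem_iInter₂.2 fun Y hY => ?_⟩
  let g := Function.update f i ⟨Y, hY⟩
  have hpg : p g ∈ ⋂ (j) (_ : j ≠ i), (f j : Set E) := mem_iInter₂.2 fun j hj => by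
    simpa [g, Function.update_of_ne hj] using mem_iInter.1 (hpK g) j
  have hpf : p f ∈ ⋂ (j) (_ : j ≠ i), (f j : Set E) :=
    mem_iInter₂.2 fun j _ => mem_iInter.1 (hpK f) j
  have hconv_i : Convex ℝ (⋂ (j) (_ : j ≠ i), (f j : Set E)) :=
    convex_iInter₂ fun j _ => hconv j _ (f j).2
  rw [← hconv_i.eq_of_isMinOn_norm hpf hi hpg (hf g)]
  simpa [g] using mem_iInter.1 (hpK g) i

theorem colored_helly_general (n : ℕ)
    (F : Fin (n + 1) → Finset (Set (EuclideanSpace ℝ (Fin n))))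
    (hconv : ∀ i, ∀ X ∈ F i, Convex ℝ X)
    (hcpt : ∀ i, ∀ X ∈ F i, IsCompact X)
    (hrep : ∀ f : Fin (n + 1) → Set (EuclideanSpace ℝ (Fin n)),
      (∀ i, f i ∈ F i) → (⋂ i, f i).Nonempty) :
    ∃ i, (⋂ X ∈ (F i : Set (Set (EuclideanSpace ℝ (Fin n)))), X).Nonempty :=
  colored_helly_of_finrank_lt_card (by simp) F hconv hcpt hrep

/-- **The colored (Bárány–Lovász) Helly theorem.** Let `F_1, …, F_{n+1}` be finite nonempty
families of convex compact sets in `ℝ^n`.  If every system of representatives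
`X_i ∈ F_i` has a common point, then for some `i` all the sets of `F_i` have a common
point. -/
theorem colored_helly (n : ℕ)
    (F : Fin (n + 1) → Finset (Set (EuclideanSpace ℝ (Fin n))))
    (hne : ∀ i, (F i).Nonempty)
    (hconv : ∀ i, ∀ X ∈ F i, Convex ℝ X)
    (hcpt : ∀ i, ∀ X ∈ F i, IsCompact X)
    (hrep : ∀ f : Fin (n + 1) → Set (EuclideanSpace ℝ (Fin n)),
      (∀ i, f i ∈ F i) → (⋂ i, f i).Nonempty) :
    ∃ i, (⋂ X ∈ (F i : Set (Set (EuclideanSpace ℝ (Fin n)))), X).Nonempty :=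
  colored_helly_general n F hconv hcpt hrep
end

section
/- Let F be a finite family of convex compact sets in ℝ^d and let 1 ≤ k ≤ d. If every subfamily of F with at most k sets has a common point, then every affine flat of codimension k - 1 in ℝ^d can be translated so as to intersect every member of F. -/
/-!
Let `L` be the direction of the flat. Helly's theorem in the quotient `ℝ^d ⧸ L`, of dimension
at most `k - 1`, shows that the images of the members of `F` have a common point `q`; the
translate of the flat lying over `q` then meets every member of `F`.
-/

open Module Finset

theorem Convex.helly_theorem_linearMap_image {𝕜 E V ι : Type*} [Field 𝕜] [LinearOrder 𝕜]
    [IsStrictOrderedRing 𝕜] [AddCommGroup E] [Module 𝕜 E] [AddCommGroup V] [Module 𝕜 V]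
    [FiniteDimensional 𝕜 V] (f : E →ₗ[𝕜] V) {X : ι → Set E} {s : Finset ι} {k : ℕ}
    (hk : finrank 𝕜 V + 1 ≤ k) (h_convex : ∀ i ∈ s, Convex 𝕜 (X i))
    (h_inter : ∀ I ⊆ s, #I ≤ k → (⋂ i ∈ I, X i).Nonempty) :
    (⋂ i ∈ s, f '' X i).Nonempty := by
  refine helly_theorem' (fun i hi => (h_convex i hi).linear_image f) fun I hI hIcard => ?_
  obtain ⟨x, hx⟩ := h_inter I hI (hIcard.trans hk)
  exact ⟨f x, Set.mem_iInter₂.mpr fun i hi => ⟨x, Set.mem_iInter₂.mp hx i hi, rfl⟩⟩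

theorem AffineSubspace.mem_image_add_of_sub_mem_direction {R V : Type*} [Ring R]
    [AddCommGroup V] [Module R V] (M : AffineSubspace R V) {m x y : V} (hm : m ∈ M)
    (hxy : x - y ∈ M.direction) : x ∈ (fun v => (y - m) + v) '' M :=
  ⟨(x - y) + m, M.vadd_mem_of_mem_direction hxy hm, by simp only; abel⟩

theorem horn_klee_translate_general (d k : ℕ)
    (F : Finset (Set (EuclideanSpace ℝ (Fin d))))
    (hconv : ∀ X ∈ F, Convex ℝ X)
    (hhelly : ∀ G ⊆ F, G.card ≤ k → (⋂ X ∈ (G : Set (Set (EuclideanSpace ℝ (Fin d)))), X).Nonempty) :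
    ∀ M : AffineSubspace ℝ (EuclideanSpace ℝ (Fin d)),
      (M : Set (EuclideanSpace ℝ (Fin d))).Nonempty →
      Module.finrank ℝ M.direction = d - k + 1 →
      ∃ w : EuclideanSpace ℝ (Fin d), ∀ X ∈ F,
        (X ∩ ((fun y => w + y) '' (M : Set (EuclideanSpace ℝ (Fin d))))).Nonempty := by
  rintro M ⟨m, hm⟩ hdim
  set L := M.direction
  have hrank : finrank ℝ (EuclideanSpace ℝ (Fin d) ⧸ L) + 1 ≤ k := by
    have hsum := L.finrank_quotient_add_finrank
    have hle := L.finrank_le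
    rw [finrank_euclideanSpace_fin] at hsum hle
    omega
  obtain ⟨q, hq⟩ := Convex.helly_theorem_linearMap_image L.mkQ hrank (X := id) hconv
    fun G hG hGk => by simpa using hhelly G hG hGk
  obtain ⟨y, rfl⟩ := L.mkQ_surjective q
  refine ⟨y - m, fun X hX => ?_⟩
  obtain ⟨x, hxX, hxy⟩ := Set.mem_iInter₂.mp hq X hX
  exact ⟨x, hxX, M.mem_image_add_of_sub_mem_direction hm ((Submodule.Quotient.eq L).mp hxy)⟩

/-- **One implication of the Horn–Klee theorem.** Let `F` be a finite family of convex
compact sets in `ℝ^d` and `1 ≤ k ≤ d`.  If every subfamily of at most `k` sets has a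
common point, then every affine flat of codimension `k - 1` (i.e. of dimension
`d - k + 1`) can be translated to intersect every member of `F`. -/
theorem horn_klee_translate (d k : ℕ) (hk1 : 1 ≤ k) (hkd : k ≤ d)
    (F : Finset (Set (EuclideanSpace ℝ (Fin d))))
    (hconv : ∀ X ∈ F, Convex ℝ X) (hcpt : ∀ X ∈ F, IsCompact X)
    (hhelly : ∀ G ⊆ F, G.card ≤ k → (⋂ X ∈ (G : Set (Set (EuclideanSpace ℝ (Fin d)))), X).Nonempty) :
    ∀ M : AffineSubspace ℝ (EuclideanSpace ℝ (Fin d)),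
      (M : Set (EuclideanSpace ℝ (Fin d))).Nonempty →
      Module.finrank ℝ M.direction = d - k + 1 →
      ∃ w : EuclideanSpace ℝ (Fin d), ∀ X ∈ F,
        (X ∩ ((fun y => w + y) '' (M : Set (EuclideanSpace ℝ (Fin d))))).Nonempty :=
  horn_klee_translate_general d k F hconv hhelly
end
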